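/- arXiv:math/9908124 — 4 statements merged into one kernel-verified Lean document; each statement's English description precedes it below -/
import Mathlib

section
/- The polynomial f(x) = x^12 - (12/11)x^11 + 1 is irreducible over the rational numbers ℚ. -/
open Polynomial

instance : Fact (Nat.Prime 11) := ⟨by norm_num⟩

/-- Integer version of `f`, multiplied by 11. -/
noncomputable def gZ : Polynomial ℤ := C 11 * X ^ 12 - C 12 * X ^ 11 + C 11

lemma gZ_natDegree : gZ.natDegree = 12 := by
  unfold gZ
  compute_degree!

lemma gZ_coeff_zero : gZ.coeff 0 = 11 := by
  simp [gZ, coeff_X_pow]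

lemma gZ_coeff_eleven : gZ.coeff 11 = -12 := by
  simp [gZ, coeff_X_pow]

lemma gZ_ne_zero : gZ ≠ 0 := by
  intro h
  have h0 := gZ_coeff_zero
  rw [h] at h0
  simp at h0

lemma gZ_leadingCoeff : gZ.leadingCoeff = 11 := by
  rw [leadingCoeff, gZ_natDegree]
  simp [gZ, coeff_X_pow]

/-- `gZ` reduces to `-X^11` mod 11. -/
lemma gZ_map_mod11 : gZ.map (Int.castRingHom (ZMod 11)) = -(X ^ 11) := by
  simp only [gZ, Polynomial.map_add, Polynomial.map_sub, Polynomial.map_mul,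
    Polynomial.map_pow, map_C, map_X]
  rw [show (Int.castRingHom (ZMod 11)) 11 = 0 from by decide,
    show (Int.castRingHom (ZMod 11)) 12 = 1 from by decide]
  simp

lemma gZ_isPrimitive : gZ.IsPrimitive := by
  intro r hr
  rw [C_dvd_iff_dvd_coeff] at hr
  have h0 : r ∣ 11 := by have := hr 0; rwa [gZ_coeff_zero] at this
  have h1 : r ∣ -12 := by have := hr 11; rwa [gZ_coeff_eleven] at this
  have h2 : r ∣ (-1 : ℤ) := by simpa using dvd_add h0 h1
  exact isUnit_of_dvd_one (dvd_neg.mp h2)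

/-- Key auxiliary lemma: if `a * b = gZ` and `b` becomes a unit mod 11,
then `b` is a unit. -/
lemma key (a b : Polynomial ℤ) (h : a * b = gZ)
    (hb : IsUnit (b.map (Int.castRingHom (ZMod 11)))) : IsUnit b := by
  have ha0 : a ≠ 0 := by
    intro h0; apply gZ_ne_zero; rw [← h, h0, zero_mul]
  have hb0 : b ≠ 0 := by
    intro h0; apply gZ_ne_zero; rw [← h, h0, mul_zero]
  have hdeg : a.natDegree + b.natDegree = 12 := by
    rw [← natDegree_mul ha0 hb0, h, gZ_natDegree]
  have hmap : a.map (Int.castRingHom (ZMod 11)) * b.map (Int.castRingHom (ZMod 11))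
      = -(X ^ 11) := by
    rw [← Polynomial.map_mul, h, gZ_map_mod11]
  have hbne : b.map (Int.castRingHom (ZMod 11)) ≠ 0 := hb.ne_zero
  have hane : a.map (Int.castRingHom (ZMod 11)) ≠ 0 := by
    intro h0
    rw [h0, zero_mul] at hmap
    exact (by simp : -(X ^ 11 : (ZMod 11)[X]) ≠ 0) hmap.symm
  have hbdeg0 : (b.map (Int.castRingHom (ZMod 11))).natDegree = 0 :=
    natDegree_eq_zero_of_isUnit hb
  have hadeg11 : (a.map (Int.castRingHom (ZMod 11))).natDegree = 11 := by
    have hmul := natDegree_mul hane hbne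
    rw [hmap, hbdeg0] at hmul
    simp only [natDegree_neg, natDegree_X_pow] at hmul
    omega
  have ha11 : 11 ≤ a.natDegree := by
    rw [← hadeg11]; exact natDegree_map_le
  have hble : b.natDegree ≤ 1 := by omega
  rcases Nat.le_one_iff_eq_zero_or_eq_one.mp hble with hbd | hbd
  · -- degree 0 : b is a constant dividing the (primitive) polynomial
    have hbC : b = C (b.coeff 0) := eq_C_of_natDegree_eq_zero hbd
    have hdvd : C (b.coeff 0) ∣ gZ := by
      rw [← h, ← hbC]; exact dvd_mul_left b a
    rw [hbC]
    exact (isUnit_C).mpr (gZ_isPrimitive _ hdvd)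
  · -- degree 1 : leads to a rational root, contradiction
    exfalso
    set c1 := b.coeff 1 with hc1def
    set c0 := b.coeff 0 with hc0def
    -- 11 ∣ c1
    have hc1mod : ((c1 : ZMod 11)) = 0 := by
      have hco : (b.map (Int.castRingHom (ZMod 11))).coeff 1 = 0 :=
        coeff_eq_zero_of_natDegree_lt (by omega)
      rw [coeff_map] at hco
      simpa using hco
    have h11c1 : (11 : ℤ) ∣ c1 := by
      rwa [ZMod.intCast_zmod_eq_zero_iff_dvd] at hc1mod
    -- c1 ∣ 11 via leading coefficients
    have hlc : a.leadingCoeff * b.leadingCoeff = 11 := by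
      rw [← leadingCoeff_mul, h, gZ_leadingCoeff]
    have hblc : b.leadingCoeff = c1 := by rw [leadingCoeff, hbd]
    have hc1dvd : c1 ∣ 11 := ⟨a.leadingCoeff, by rw [← hlc, hblc, mul_comm]⟩
    -- ¬ 11 ∣ c0
    have hc0mod : ((c0 : ZMod 11)) ≠ 0 := by
      intro h0
      apply hbne
      have hC : b.map (Int.castRingHom (ZMod 11))
          = C ((b.map (Int.castRingHom (ZMod 11))).coeff 0) :=
        eq_C_of_natDegree_eq_zero hbdeg0
      rw [hC, coeff_map]
      have h0' : (Int.castRingHom (ZMod 11)) (b.coeff 0) = 0 := h0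
      rw [h0', map_zero]
    have h11c0 : ¬ (11 : ℤ) ∣ c0 := by
      intro hd
      exact hc0mod ((ZMod.intCast_zmod_eq_zero_iff_dvd _ _).mpr hd)
    -- c0 ∣ 11
    have hcoeff0 : a.coeff 0 * c0 = 11 := by
      have hm := mul_coeff_zero a b
      rw [h, gZ_coeff_zero] at hm
      exact hm.symm
    have hc0dvd : c0 ∣ 11 := ⟨a.coeff 0, by rw [← hcoeff0, mul_comm]⟩
    -- determine c1 and c0
    have hc1abs : c1 = 11 ∨ c1 = -11 := by
      have h1 : c1.natAbs ∣ 11 := by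
        have := Int.natAbs_dvd_natAbs.mpr hc1dvd
        simpa using this
      have h2 : 11 ∣ c1.natAbs := by
        have := Int.natAbs_dvd_natAbs.mpr h11c1
        simpa using this
      have heq : c1.natAbs = 11 := Nat.dvd_antisymm h1 h2
      rcases Int.natAbs_eq_iff.mp heq with h' | h'
      · exact Or.inl (by exact_mod_cast h')
      · exact Or.inr (by exact_mod_cast h')
    have hc0abs : c0 = 1 ∨ c0 = -1 := by
      have h1 : c0.natAbs ∣ 11 := by
        have := Int.natAbs_dvd_natAbs.mpr hc0dvd
        simpa using this
      rcases (by norm_num : Nat.Prime 11).eq_one_or_self_of_dvd _ h1 with h' | h'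
      · rcases Int.natAbs_eq_iff.mp h' with h'' | h''
        · exact Or.inl (by exact_mod_cast h'')
        · exact Or.inr (by exact_mod_cast h'')
      · exfalso
        apply h11c0
        have hN : (11 : ℤ).natAbs ∣ c0.natAbs := by rw [h']; norm_num
        exact Int.natAbs_dvd_natAbs.mp hN
    -- b = C c1 * X + C c0
    have hbform : b = C c1 * X + C c0 := by
      have hd1 : b.degree ≤ 1 := by
        rw [degree_eq_natDegree hb0, hbd]
        exact_mod_cast le_refl _
      exact eq_X_add_C_of_degree_le_one hd1
    -- four concrete possibilities for b
    have hb4 : b = C 11 * X + C 1 ∨ b = C 11 * X + C (-1) ∨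
        b = C (-11) * X + C 1 ∨ b = C (-11) * X + C (-1) := by
      rcases hc1abs with h1' | h1' <;> rcases hc0abs with h0' | h0' <;>
        rw [hbform, h1', h0'] <;> tauto
    have hdvdg : ∀ r : ℚ, aeval r b = 0 → aeval r gZ = 0 := by
      intro r hr
      rw [← h, map_mul, hr, mul_zero]
    rcases hb4 with hb' | hb' | hb' | hb'
    · exact absurd (hdvdg (-1/11) (by rw [hb']; simp [map_ofNat]; try norm_num))
        (by simp [gZ, map_ofNat]; norm_num)
    · exact absurd (hdvdg (1/11) (by rw [hb']; simp [map_ofNat]; try norm_num))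
        (by simp [gZ, map_ofNat]; norm_num)
    · exact absurd (hdvdg (1/11) (by rw [hb']; simp [map_ofNat]; try norm_num))
        (by simp [gZ, map_ofNat]; norm_num)
    · exact absurd (hdvdg (-1/11) (by rw [hb']; simp [map_ofNat]; try norm_num))
        (by simp [gZ, map_ofNat]; norm_num)

lemma gZ_irreducible : Irreducible gZ := by
  constructor
  · intro h
    have hd := natDegree_eq_zero_of_isUnit h
    rw [gZ_natDegree] at hd
    exact absurd hd (by norm_num)
  · intro a b h
    have hmap : a.map (Int.castRingHom (ZMod 11)) * b.map (Int.castRingHom (ZMod 11))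
        = -(X ^ 11) := by
      rw [← Polynomial.map_mul, ← h, gZ_map_mod11]
    have hXdvd : ∀ p q : Polynomial (ZMod 11),
        p * q = -(X ^ 11) → p ∣ X ^ 11 := by
      intro p q hpq
      exact dvd_neg.mp ⟨q, hpq.symm⟩
    obtain ⟨i, hi, hia⟩ := (dvd_prime_pow prime_X 11).mp (hXdvd _ _ hmap)
    obtain ⟨j, hj, hjb⟩ := (dvd_prime_pow prime_X 11).mp
      (hXdvd _ _ (by rwa [mul_comm] at hmap))
    rcases Nat.eq_zero_or_pos i with hi0 | hipos
    · left
      apply key b a (by rw [mul_comm]; exact h.symm)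
      rw [hi0, pow_zero] at hia
      exact hia.symm.isUnit isUnit_one
    rcases Nat.eq_zero_or_pos j with hj0 | hjpos
    · right
      apply key a b h.symm
      rw [hj0, pow_zero] at hjb
      exact hjb.symm.isUnit isUnit_one
    -- both i, j ≥ 1 : then 121 ∣ 11, absurd
    exfalso
    have hXa : X ∣ a.map (Int.castRingHom (ZMod 11)) :=
      (dvd_pow_self X hipos.ne').trans hia.symm.dvd
    have hXb : X ∣ b.map (Int.castRingHom (ZMod 11)) :=
      (dvd_pow_self X hjpos.ne').trans hjb.symm.dvd
    have ha0 : (11 : ℤ) ∣ a.coeff 0 := by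
      have h0 := X_dvd_iff.mp hXa
      rw [coeff_map] at h0
      have h0' : ((a.coeff 0 : ℤ) : ZMod 11) = 0 := h0
      have := (ZMod.intCast_zmod_eq_zero_iff_dvd (a.coeff 0) 11).mp h0'
      exact_mod_cast this
    have hb0 : (11 : ℤ) ∣ b.coeff 0 := by
      have h0 := X_dvd_iff.mp hXb
      rw [coeff_map] at h0
      have h0' : ((b.coeff 0 : ℤ) : ZMod 11) = 0 := h0
      have := (ZMod.intCast_zmod_eq_zero_iff_dvd (b.coeff 0) 11).mp h0'
      exact_mod_cast this
    have h121 : (121 : ℤ) ∣ 11 := by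
      have hm : a.coeff 0 * b.coeff 0 = 11 := by
        have hmc := mul_coeff_zero a b
        rw [← h, gZ_coeff_zero] at hmc
        exact hmc.symm
      rw [← hm]
      exact mul_dvd_mul ha0 hb0
    norm_num at h121

/-- The polynomial `f(x) = x^12 - (12/11) x^11 + 1` over `ℚ`. -/
noncomputable def f : Polynomial ℚ := X ^ 12 - C (12 / 11) * X ^ 11 + 1

/-- `f(x) = x^12 - (12/11)x^11 + 1` is irreducible over `ℚ`. -/
theorem f_irreducible : Irreducible f := by
  have hirr : Irreducible (gZ.map (Int.castRingHom ℚ)) :=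
    (IsPrimitive.Int.irreducible_iff_irreducible_map_cast gZ_isPrimitive).mp gZ_irreducible
  have hu : IsUnit (C (11 : ℚ)) := isUnit_C.mpr (by norm_num)
  have heq : f * C (11 : ℚ) = gZ.map (Int.castRingHom ℚ) := by
    simp only [f, gZ, Polynomial.map_add, Polynomial.map_sub, Polynomial.map_mul,
      Polynomial.map_pow, map_C, map_X]
    rw [show (Int.castRingHom ℚ) 11 = (11:ℚ) from by norm_num,
      show (Int.castRingHom ℚ) 12 = (12:ℚ) from by norm_num]
    ring_nf
    simp [← C_mul]
  have hassoc : Associated f (gZ.map (Int.castRingHom ℚ)) := ⟨hu.unit, by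
    rw [IsUnit.unit_spec]; exact heq⟩
  exact hassoc.symm.irreducible hirr
end

section
/- For all positive integers m and n, every complex critical value of the polynomial β_{m,n}(x) = ((m+n)^(m+n)/(m^m n^n)) x^m (1-x)^n lies in {0, 1}; more precisely, every complex root of the derivative of β_{m,n} lies in {0, 1, m/(m+n)}, and β_{m,n}(0) = 0, β_{m,n}(1) = 0, β_{m,n}(m/(m+n)) = 1. -/
/-! The derivative of `x^m (1-x)^n` is `x^(m-1) (1-x)^(n-1) (m(1-x) - n x)`, whose only roots
are `0`, `1` and `m/(m+n)`; at `m/(m+n)` the normalising constant of `β_{m,n}` is exactly the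
reciprocal of `x^m (1-x)^n`, so the critical values are `0` and `1`. -/

open Polynomial

/-- The Belyĭ polynomial `β_{m,n}(x) = ((m+n)^(m+n)/(m^m n^n)) x^m (1-x)^n`, over `ℂ`. -/
noncomputable def beta (m n : ℕ) : Polynomial ℂ :=
  C ((m + n : ℂ) ^ (m + n) / ((m : ℂ) ^ m * (n : ℂ) ^ n)) * X ^ m * (1 - X) ^ n

theorem derivative_X_pow_succ_mul_one_sub_X_pow_succ {R : Type*} [CommRing R] (m n : ℕ) :
    derivative (X ^ (m + 1) * (1 - X) ^ (n + 1) : R[X]) =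
      X ^ m * (1 - X) ^ n * (((m : R[X]) + 1) * (1 - X) - ((n : R[X]) + 1) * X) := by
  simp only [derivative_mul, derivative_pow, derivative_sub, derivative_one, derivative_X,
    map_natCast]
  push_cast
  ring

theorem eq_zero_or_eq_one_or_eq_div_of_isRoot_derivative {K : Type*} [Field K] [CharZero K]
    {m n : ℕ} (hm : 0 < m) (hn : 0 < n) {z : K}
    (hz : (derivative (X ^ m * (1 - X) ^ n : K[X])).IsRoot z) :
    z = 0 ∨ z = 1 ∨ z = m / (m + n) := by
  obtain ⟨a, rfl⟩ : ∃ a, m = a + 1 := ⟨m - 1, by omega⟩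
  obtain ⟨b, rfl⟩ : ∃ b, n = b + 1 := ⟨n - 1, by omega⟩
  rw [IsRoot, derivative_X_pow_succ_mul_one_sub_X_pow_succ] at hz
  simp only [eval_mul, eval_pow, eval_sub, eval_one, eval_X, eval_add, eval_natCast] at hz
  rcases mul_eq_zero.mp hz with hz | hz
  · rcases mul_eq_zero.mp hz with hz | hz
    · exact Or.inl (pow_eq_zero_iff'.mp hz).1
    · exact Or.inr (Or.inl (sub_eq_zero.mp (pow_eq_zero_iff'.mp hz).1).symm)
  · have hsum : ((a + 1 : ℕ) : K) + (b + 1 : ℕ) ≠ 0 := by norm_cast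
    refine Or.inr (Or.inr ((eq_div_iff hsum).mpr ?_))
    push_cast
    linear_combination -hz

theorem beta_eq_C_mul (m n : ℕ) :
    beta m n = C ((m + n : ℂ) ^ (m + n) / ((m : ℂ) ^ m * (n : ℂ) ^ n)) * (X ^ m * (1 - X) ^ n) :=
  mul_assoc _ _ _

theorem isRoot_derivative_beta_iff (m n : ℕ) (z : ℂ) :
    (derivative (beta m n)).IsRoot z ↔ (derivative (X ^ m * (1 - X) ^ n : ℂ[X])).IsRoot z := by
  have hc : (m + n : ℂ) ^ (m + n) / ((m : ℂ) ^ m * (n : ℂ) ^ n) ≠ 0 := by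
    simp only [ne_eq, div_eq_zero_iff, pow_eq_zero_iff', mul_eq_zero, Nat.cast_eq_zero]
    norm_cast
    omega
  simp [IsRoot, beta_eq_C_mul, hc]

theorem eval_zero_beta {m : ℕ} (hm : 0 < m) (n : ℕ) : (beta m n).eval 0 = 0 := by
  simp [beta, hm.ne']

theorem eval_one_beta (m : ℕ) {n : ℕ} (hn : 0 < n) : (beta m n).eval 1 = 0 := by
  simp [beta, hn.ne']

theorem eval_div_beta (m n : ℕ) : (beta m n).eval ((m : ℂ) / (m + n)) = 1 := by
  rcases Nat.eq_zero_or_pos (m + n) with h | h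
  · obtain ⟨rfl, rfl⟩ := Nat.add_eq_zero_iff.mp h
    simp [beta]
  have hsum : (m + n : ℂ) ≠ 0 := by exact_mod_cast h.ne'
  have hcompl : 1 - (m : ℂ) / (m + n) = n / (m + n) := by
    field_simp
    ring
  simp only [beta, eval_mul, eval_pow, eval_C, eval_X, eval_sub, eval_one, hcompl, div_pow]
  field_simp
  ring

/-- For positive `m, n`: every root of the derivative of `β_{m,n}` lies in
`{0, 1, m/(m+n)}`, we have `β_{m,n}(0) = 0`, `β_{m,n}(1) = 0`,
`β_{m,n}(m/(m+n)) = 1`, and hence every critical value of `β_{m,n}` lies in `{0, 1}`. -/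
theorem beta_critical_values (m n : ℕ) (hm : 0 < m) (hn : 0 < n) :
    (∀ z : ℂ, (derivative (beta m n)).eval z = 0 →
      z = 0 ∨ z = 1 ∨ z = (m : ℂ) / (m + n)) ∧
    (beta m n).eval 0 = 0 ∧ (beta m n).eval 1 = 0 ∧
    (beta m n).eval ((m : ℂ) / (m + n)) = 1 ∧
    (∀ z : ℂ, (derivative (beta m n)).eval z = 0 →
      (beta m n).eval z = 0 ∨ (beta m n).eval z = 1) := by
  have critical_points : ∀ z : ℂ, (derivative (beta m n)).eval z = 0 →
      z = 0 ∨ z = 1 ∨ z = (m : ℂ) / (m + n) := fun z hz =>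
    eq_zero_or_eq_one_or_eq_div_of_isRoot_derivative hm hn
      ((isRoot_derivative_beta_iff m n z).mp hz)
  refine ⟨critical_points, eval_zero_beta hm n, eval_one_beta m hn, eval_div_beta m n, ?_⟩
  intro z hz
  rcases critical_points z hz with rfl | rfl | rfl
  · exact Or.inl (eval_zero_beta hm n)
  · exact Or.inl (eval_one_beta m hn)
  · exact Or.inr (eval_div_beta m n)
end

section
/- Let g ∈ ℂ[X] be a nonconstant polynomial all of whose critical values lie in {0,1}, and suppose 1/2 is not a critical value of g. Then the polynomial h = β_{1,1} ∘ g = 4g(1-g) has all of its critical values in {0,1}, and every complex root of h - 1 has multiplicity exactly 2. -/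
open Polynomial

lemma eq_one_of_le_one_of_pos {n : ℕ} (h1 : 0 < n) (h2 : ¬ 1 < n) : n = 1 := by omega

/-- If `g ∈ ℂ[X]` is nonconstant, all critical values of `g` lie in `{0,1}`, and `1/2`
is not a critical value of `g`, then `h = β_{1,1} ∘ g = 4g(1-g)` has all critical values
in `{0,1}` and every root of `h - 1` has multiplicity exactly `2`. -/
theorem clean_composition (g : Polynomial ℂ) (hg : 0 < g.degree)
    (hcrit : ∀ z : ℂ, (derivative g).eval z = 0 → g.eval z = 0 ∨ g.eval z = 1)
    (hhalf : ∀ z : ℂ, (derivative g).eval z = 0 → g.eval z ≠ 1 / 2) :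
    (∀ z : ℂ, (derivative (4 * g * (1 - g))).eval z = 0 →
      (4 * g * (1 - g)).eval z = 0 ∨ (4 * g * (1 - g)).eval z = 1) ∧
    (∀ z : ℂ, (4 * g * (1 - g) - 1).IsRoot z →
      (4 * g * (1 - g) - 1).rootMultiplicity z = 2) := by
  have hd2 : derivative ((2:ℂ[X]) * g - 1) = 2 * derivative g := by
    simp [derivative_sub, derivative_mul]
  have hd2' : derivative ((1:ℂ[X]) - 2 * g) = -(2 * derivative g) := by
    simp [derivative_sub, derivative_mul]
  constructor
  · intro z hz
    set a := (derivative g).eval z with ha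
    set b := g.eval z with hb
    have hz' : 4 * a * (1 - 2 * b) = 0 := by
      have h := hz
      simp only [derivative_mul, derivative_sub, derivative_one, derivative_ofNat, eval_add,
        eval_mul, eval_sub, eval_one, eval_ofNat, eval_zero, zero_mul, zero_add, ← ha, ← hb] at h
      linear_combination h
    rcases mul_eq_zero.mp hz' with h4a | h12b
    · have ha0 : a = 0 := by
        rcases mul_eq_zero.mp h4a with h | h
        · exact absurd h (by norm_num)
        · exact h
      rcases hcrit z ha0 with h | h <;> left <;> simp [eval_mul, eval_sub, h]
    · have hb2 : b = 1 / 2 := by linear_combination -h12b / 2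
      right
      simp [eval_mul, eval_sub, ← hb, hb2]
      norm_num
  · intro z hz
    have hb : g.eval z = 1 / 2 := by
      have h0 : (4:ℂ) * g.eval z * (1 - g.eval z) - 1 = 0 := by simpa using hz
      have h1 : (2 * g.eval z - 1) ^ 2 = 0 := by linear_combination -h0
      have h2 : (2:ℂ) * g.eval z - 1 = 0 := by
        exact pow_eq_zero_iff (two_ne_zero) |>.mp h1
      linear_combination h2 / 2
    have ha : (derivative g).eval z ≠ 0 := fun h => hhalf z h hb
    have h1 : (2:ℂ[X]) * g - 1 ≠ 0 := by
      intro h0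
      apply ha
      have := congrArg (eval z) (congrArg derivative h0)
      rw [hd2] at this
      simpa using this
    have h2 : (1:ℂ[X]) - 2 * g ≠ 0 := by
      intro h0
      apply ha
      have := congrArg (eval z) (congrArg derivative h0)
      rw [hd2'] at this
      simpa using this
    have hfac : 4 * g * (1 - g) - 1 = ((1:ℂ[X]) - 2 * g) * (2 * g - 1) := by ring
    rw [hfac, rootMultiplicity_mul (mul_ne_zero h2 h1)]
    have hr1 : ((2:ℂ[X]) * g - 1).IsRoot z := by simp [IsRoot, hb]
    have hr2 : ((1:ℂ[X]) - 2 * g).IsRoot z := by simp [IsRoot, hb]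
    have hm1 : ((2:ℂ[X]) * g - 1).rootMultiplicity z = 1 := by
      apply eq_one_of_le_one_of_pos ((rootMultiplicity_pos h1).mpr hr1)
      rw [one_lt_rootMultiplicity_iff_isRoot h1]
      rintro ⟨-, hder⟩
      rw [IsRoot, hd2] at hder
      simp at hder
      exact ha hder
    have hm2 : ((1:ℂ[X]) - 2 * g).rootMultiplicity z = 1 := by
      apply eq_one_of_le_one_of_pos ((rootMultiplicity_pos h2).mpr hr2)
      rw [one_lt_rootMultiplicity_iff_isRoot h2]
      rintro ⟨-, hder⟩
      rw [IsRoot, hd2'] at hder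
      simp at hder
      exact ha hder
    rw [hm1, hm2]
end

section
/- The group presented by generators x, y subject to the relations x^5 = y^3 = (xy)^2 = 1 is isomorphic to the alternating group A_5. -/
/-- The relations `x⁵ = y³ = (xy)² = 1` for the presentation `⟨x, y ∣ x⁵, y³, (xy)²⟩`,
written as elements of the free group on two generators. -/
def rels : Set (FreeGroup (Fin 2)) :=
  {(FreeGroup.of 0) ^ 5, (FreeGroup.of 1) ^ 3, (FreeGroup.of 0 * FreeGroup.of 1) ^ 2}

/-!
The assignment `x ↦ (0 1 2 3 4)`, `y ↦ (1 4 2)` respects the relations, and the two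
permutations generate `A₅`: a subgroup containing elements of orders 5, 3 and 2 has index at
most 2, hence is normal, hence is all of the simple group `A₅`. So the presented group maps
onto `A₅`, and it remains to see that it has at most 60 elements.

With `t = xy` the relations read `x⁵ = t² = (tx)³ = 1`. The twelve right cosets of `⟨x⟩`
listed below are the vertices of an icosahedron: `⟨x⟩` itself, its five neighbours `⟨x⟩ t xⁱ`,
the five neighbours `⟨x⟩ t x² t xⁱ` of the antipode, and the antipode `⟨x⟩ t x² t x³ t`.
Right multiplication by `x` and by `t` permutes them (coset enumeration), so they cover the
group, which therefore has at most `5 · 12` elements.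
-/

open Subgroup Set Equiv
open scoped Pointwise

theorem Subgroup.coe_mul_eq_univ_of_mul_mem {G : Type*} [Group G] {s : Set G}
    (hs : closure s = ⊤) (hs_fin : ∀ g ∈ s, IsOfFinOrder g) (H : Subgroup G) {R : Set G}
    (hR₁ : (1 : G) ∈ R) (hR : ∀ r ∈ R, ∀ g ∈ s, r * g ∈ (H : Set G) * R) :
    (H : Set G) * R = univ := by
  refine eq_univ_of_forall fun a ↦ ?_
  have ha : a ∈ Submonoid.closure s := by
    rw [← closure_toSubmonoid_of_isOfFinOrder hs_fin, hs]; trivial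
  induction ha using Submonoid.closure_induction_right with
  | one => exact ⟨1, one_mem H, 1, hR₁, one_mul 1⟩
  | mul_right a _ g hg ih =>
    obtain ⟨h, hh, r, hr, rfl⟩ := ih
    obtain ⟨h', hh', r', hr', hrg⟩ := hR r hr g hg
    exact ⟨h * h', mul_mem hh hh', r', hr', by simp only [mul_assoc, ← hrg]⟩

namespace Icosahedral

variable {G : Type*} [Group G] {x t : G}

theorem mul_self_eq_one_of_sq (ht : t ^ 2 = 1) : t * t = 1 := by rwa [← sq]

theorem inv_eq_self_of_sq (ht : t ^ 2 = 1) : t⁻¹ = t :=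
  inv_eq_of_mul_eq_one_right (mul_self_eq_one_of_sq ht)

theorem mul_eq_inv_mul_of_mul_eq {a b c : G} (ht : t ^ 2 = 1) (h : a * t = c * b) :
    b * t = c⁻¹ * a :=
  calc b * t = c⁻¹ * (a * t) * t := by rw [h]; group
    _ = c⁻¹ * a := by rw [mul_assoc, mul_assoc, mul_self_eq_one_of_sq ht, mul_one]

theorem t_mul_x_mul_t (ht : t ^ 2 = 1) (htx : (t * x) ^ 3 = 1) :
    t * x * t = x⁻¹ * t * x⁻¹ :=
  calc t * x * t = (t * x) ^ 3 * (x⁻¹ * t⁻¹ * x⁻¹) := by rw [pow_three]; group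
    _ = x⁻¹ * t * x⁻¹ := by rw [htx, one_mul, inv_eq_self_of_sq ht]

theorem t_mul_x_inv_mul_t (ht : t ^ 2 = 1) (htx : (t * x) ^ 3 = 1) :
    t * x⁻¹ * t = x * t * x := by
  simpa [inv_eq_self_of_sq ht, mul_assoc] using congrArg (·⁻¹) (t_mul_x_mul_t ht htx)

theorem pow_three_eq_inv_mul_inv (hx : x ^ 5 = 1) : x ^ 3 = x⁻¹ * x⁻¹ :=
  calc x ^ 3 = x ^ 5 * x⁻¹ * x⁻¹ := by group
    _ = x⁻¹ * x⁻¹ := by rw [hx, one_mul]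

theorem pow_four_eq_inv (hx : x ^ 5 = 1) : x ^ 4 = x⁻¹ :=
  calc x ^ 4 = x ^ 5 * x⁻¹ := by group
    _ = x⁻¹ := by rw [hx, one_mul]

theorem t_mul_x_pow_three_mul_t (hx : x ^ 5 = 1) (ht : t ^ 2 = 1) (htx : (t * x) ^ 3 = 1) :
    t * x ^ 3 * t = x * (t * x ^ 2 * t * x) :=
  calc t * x ^ 3 * t = t * x⁻¹ * t * (t⁻¹ * x⁻¹ * t) := by
        rw [pow_three_eq_inv_mul_inv hx]; group
    _ = x * t * x * (x * t * x) := by rw [inv_eq_self_of_sq ht, t_mul_x_inv_mul_t ht htx]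
    _ = x * (t * x ^ 2 * t * x) := by simp only [sq, mul_assoc]

theorem t_mul_x_sq_mul_t_mul_x_sq_mul_t (hx : x ^ 5 = 1) (ht : t ^ 2 = 1)
    (htx : (t * x) ^ 3 = 1) :
    t * x ^ 2 * t * x ^ 2 * t = x⁻¹ * (t * x ^ 2 * t * x ^ 4) :=
  calc t * x ^ 2 * t * x ^ 2 * t = t * x * t * (t⁻¹ * x * t) * x ^ 2 * t := by
        simp [mul_assoc, sq]
    _ = x⁻¹ * t * x⁻¹ ^ 2 * (t * x * t) := by
        conv_lhs => rw [inv_eq_self_of_sq ht, t_mul_x_mul_t ht htx]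
        group
    _ = x⁻¹ * (t * (x ^ 5 * x⁻¹ ^ 3) * t * (x ^ 5 * x⁻¹)) := by
        rw [t_mul_x_mul_t ht htx, hx]; group
    _ = x⁻¹ * (t * x ^ 2 * t * x ^ 4) := by group

theorem antipode_mul_x (hx : x ^ 5 = 1) (ht : t ^ 2 = 1) (htx : (t * x) ^ 3 = 1) :
    t * x ^ 2 * t * x ^ 3 * t * x = x⁻¹ * (t * x ^ 2 * t * x ^ 3 * t) := by
  have hB := t_mul_x_pow_three_mul_t hx ht htx
  have h : t * x ^ 2 * t * x ^ 3 * t * x = x * (t * x ^ 2 * t * x ^ 3 * t) * x ^ 2 :=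
    calc t * x ^ 2 * t * x ^ 3 * t * x = t * x ^ 2 * (t * x ^ 3 * t) * x := by group
      _ = t * x ^ 2 * (x * (t * x ^ 2 * t * x)) * x := by rw [hB]
      _ = (t * x ^ 3 * t) * (x ^ 2 * t * x ^ 2) := by simp [mul_assoc, pow_succ]
      _ = x * (t * x ^ 2 * t * x) * (x ^ 2 * t * x ^ 2) := by rw [hB]
      _ = x * (t * x ^ 2 * t * x ^ 3 * t) * x ^ 2 := by simp [mul_assoc, pow_succ]
  calc t * x ^ 2 * t * x ^ 3 * t * x
      = x⁻¹ * (x * (t * x ^ 2 * t * x ^ 3 * t) * x ^ 2) * x⁻¹ := by group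
    _ = x⁻¹ * (t * x ^ 2 * t * x ^ 3 * t) := by rw [← h]; group

variable (x t) in
def vertexRep : Option (Fin 5) ⊕ Option (Fin 5) → G
  | .inl none => 1
  | .inl (some i) => t * x ^ (i : ℕ)
  | .inr (some i) => t * x ^ 2 * t * x ^ (i : ℕ)
  | .inr none => t * x ^ 2 * t * x ^ 3 * t

theorem pow_val_mul_self (hx : x ^ 5 = 1) (i : Fin 5) :
    x ^ (i : ℕ) * x = x ^ ((i + 1 : Fin 5) : ℕ) := by
  rw [← pow_succ, pow_eq_pow_mod _ hx, Fin.val_add, Fin.val_one]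

theorem vertexRep_mul_x_mem (hx : x ^ 5 = 1) (ht : t ^ 2 = 1) (htx : (t * x) ^ 3 = 1)
    (v : Option (Fin 5) ⊕ Option (Fin 5)) :
    vertexRep x t v * x ∈ (zpowers x : Set G) * range (vertexRep x t) := by
  rcases v with (_ | i) | (_ | i)
  · exact ⟨x, mem_zpowers x, _, mem_range_self (.inl none), by simp [vertexRep]⟩
  · exact ⟨1, one_mem _, _, mem_range_self (.inl (some (i + 1))), by
      simp [vertexRep, mul_assoc, pow_val_mul_self hx]⟩
  · exact ⟨x⁻¹, inv_mem (mem_zpowers x), _, mem_range_self (.inr none), by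
      simp [vertexRep, antipode_mul_x hx ht htx]⟩
  · exact ⟨1, one_mem _, _, mem_range_self (.inr (some (i + 1))), by
      simp [vertexRep, mul_assoc, pow_val_mul_self hx]⟩

theorem vertexRep_mul_t_mem (hx : x ^ 5 = 1) (ht : t ^ 2 = 1) (htx : (t * x) ^ 3 = 1)
    (v : Option (Fin 5) ⊕ Option (Fin 5)) :
    vertexRep x t v * t ∈ (zpowers x : Set G) * range (vertexRep x t) := by
  have htt := mul_self_eq_one_of_sq ht
  have hC := t_mul_x_sq_mul_t_mul_x_sq_mul_t hx ht htx
  rcases v with (_ | i) | (_ | i)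
  · exact ⟨1, one_mem _, _, mem_range_self (.inl (some 0)), by simp [vertexRep]⟩
  · fin_cases i
    · exact ⟨1, one_mem _, _, mem_range_self (.inl none), by simp [vertexRep, htt]⟩
    · exact ⟨x⁻¹, inv_mem (mem_zpowers x), _, mem_range_self (.inl (some 4)), by
        simp [vertexRep, pow_four_eq_inv hx, t_mul_x_mul_t ht htx, mul_assoc]⟩
    · exact ⟨1, one_mem _, _, mem_range_self (.inr (some 0)), by simp [vertexRep]⟩
    · exact ⟨x, mem_zpowers x, _, mem_range_self (.inr (some 1)), by
        simp [vertexRep, t_mul_x_pow_three_mul_t hx ht htx]⟩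
    · exact ⟨x, mem_zpowers x, _, mem_range_self (.inl (some 1)), by
        simp [vertexRep, pow_four_eq_inv hx, t_mul_x_inv_mul_t ht htx, mul_assoc]⟩
  · exact ⟨1, one_mem _, _, mem_range_self (.inr (some 3)), by
      simp [vertexRep, mul_assoc, htt]⟩
  · fin_cases i
    · exact ⟨1, one_mem _, _, mem_range_self (.inl (some 2)), by
        simp [vertexRep, mul_assoc, htt]⟩
    · exact ⟨x⁻¹, inv_mem (mem_zpowers x), _, mem_range_self (.inl (some 3)), by
        simpa [vertexRep] using
          (mul_eq_inv_mul_of_mul_eq ht (t_mul_x_pow_three_mul_t hx ht htx)).symm⟩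
    · exact ⟨x⁻¹, inv_mem (mem_zpowers x), _, mem_range_self (.inr (some 4)), by
        simp [vertexRep, hC]⟩
    · exact ⟨1, one_mem _, _, mem_range_self (.inr none), by simp [vertexRep]⟩
    · exact ⟨x, mem_zpowers x, _, mem_range_self (.inr (some 2)), by
        simpa [vertexRep] using (mul_eq_inv_mul_of_mul_eq ht hC).symm⟩

theorem zpowers_mul_range_vertexRep_eq_univ (hgen : closure {x, t} = ⊤) (hx : x ^ 5 = 1)
    (ht : t ^ 2 = 1) (htx : (t * x) ^ 3 = 1) :
    (zpowers x : Set G) * range (vertexRep x t) = univ := by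
  refine coe_mul_eq_univ_of_mul_mem hgen ?_ _ ⟨.inl none, rfl⟩ ?_
  · rintro g (rfl | rfl)
    exacts [isOfFinOrder_iff_pow_eq_one.mpr ⟨5, by norm_num, hx⟩,
      isOfFinOrder_iff_pow_eq_one.mpr ⟨2, by norm_num, ht⟩]
  · rintro _ ⟨v, rfl⟩ g (rfl | rfl)
    exacts [vertexRep_mul_x_mem hx ht htx v, vertexRep_mul_t_mem hx ht htx v]

end Icosahedral

open Icosahedral in
theorem finite_and_card_le_sixty {G : Type*} [Group G] {x y : G} (hgen : closure {x, y} = ⊤)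
    (hx : x ^ 5 = 1) (hy : y ^ 3 = 1) (hxy : (x * y) ^ 2 = 1) :
    Finite G ∧ Nat.card G ≤ 60 := by
  have htx : (x * y * x) ^ 3 = 1 := by
    have hxyx : x * y * x = y⁻¹ := eq_inv_of_mul_eq_one_left (by simpa [sq, mul_assoc] using hxy)
    rw [hxyx, inv_pow, hy, inv_one]
  have hgen' : closure {x, x * y} = ⊤ := by
    have hy' : x⁻¹ * (x * y) ∈ closure {x, x * y} :=
      mul_mem (inv_mem (subset_closure (mem_insert x _))) (subset_closure (mem_insert_of_mem x rfl))
    rw [inv_mul_cancel_left] at hy'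
    exact eq_top_mono (closure_le _ |>.mpr (pair_subset (subset_closure (mem_insert x _)) hy')) hgen
  have huniv := zpowers_mul_range_vertexRep_eq_univ hgen' hx hxy htx
  have hfin : (zpowers x : Set G).Finite :=
    finite_zpowers.mpr (isOfFinOrder_iff_pow_eq_one.mpr ⟨5, by norm_num, hx⟩)
  refine ⟨finite_univ_iff.mp (huniv ▸ hfin.mul (finite_range _)), ?_⟩
  calc Nat.card G = Nat.card (univ : Set G) := Nat.card_univ.symm
    _ ≤ Nat.card (zpowers x) * Nat.card (range (vertexRep x (x * y))) := by
      rw [← huniv]; exact natCard_mul_le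
    _ ≤ 5 * 12 := by
      gcongr
      · rw [Nat.card_zpowers]; exact orderOf_le_of_pow_eq_one (by norm_num) hx
      · exact (Finite.card_range_le _).trans (by simp)

theorem nat_card_alternatingGroup_fin_five : Nat.card (alternatingGroup (Fin 5)) = 60 := by
  rw [nat_card_alternatingGroup, Nat.card_fin]; rfl

theorem eq_top_of_thirty_dvd_card {K : Subgroup (alternatingGroup (Fin 5))}
    (hK : 30 ∣ Nat.card K) : K = ⊤ := by
  obtain ⟨m, hm⟩ := hK
  have hindex : K.index ∣ 2 := ⟨m, by
    have := K.card_mul_index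
    rw [hm, nat_card_alternatingGroup_fin_five] at this
    linarith⟩
  rcases (Nat.dvd_prime Nat.prime_two).mp hindex with h | h
  · exact index_eq_one.mp h
  · rcases (alternatingGroup.isSimpleGroup (by simp)).eq_bot_or_eq_top_of_normal K
      (normal_of_index_eq_two h) with rfl | rfl
    · simp only [card_bot] at hm
      omega
    · rfl

def a5Gen : Fin 2 → alternatingGroup (Fin 5) :=
  ![⟨finRotate 5, Perm.mem_alternatingGroup.mpr (by decide)⟩,
    ⟨swap 1 4 * swap 4 2, Perm.mem_alternatingGroup.mpr (by decide)⟩]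

theorem orderOf_a5Gen_zero : orderOf (a5Gen 0) = 5 :=
  have : Fact (Nat.Prime 5) := ⟨by norm_num⟩
  orderOf_eq_prime (by decide) (by decide)

theorem orderOf_a5Gen_one : orderOf (a5Gen 1) = 3 :=
  orderOf_eq_prime (by decide) (by decide)

theorem orderOf_a5Gen_zero_mul_one : orderOf (a5Gen 0 * a5Gen 1) = 2 :=
  orderOf_eq_prime (by decide) (by decide)

theorem closure_range_a5Gen : closure (range a5Gen) = ⊤ := by
  set K := closure (range a5Gen)
  have h0 : a5Gen 0 ∈ K := subset_closure (mem_range_self 0)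
  have h1 : a5Gen 1 ∈ K := subset_closure (mem_range_self 1)
  have h5 := orderOf_a5Gen_zero ▸ K.orderOf_dvd_natCard h0
  have h3 := orderOf_a5Gen_one ▸ K.orderOf_dvd_natCard h1
  have h2 := orderOf_a5Gen_zero_mul_one ▸ K.orderOf_dvd_natCard (mul_mem h0 h1)
  exact eq_top_of_thirty_dvd_card (by omega)

theorem a5Gen_rels : ∀ r ∈ rels, FreeGroup.lift a5Gen r = 1 := by
  rintro r (rfl | rfl | rfl) <;> simp [a5Gen] <;> decide

theorem closure_of_zero_of_one :
    closure {PresentedGroup.of 0, PresentedGroup.of 1} =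
      (⊤ : Subgroup (PresentedGroup rels)) := by
  refine eq_top_mono (closure_mono ?_) (PresentedGroup.closure_range_of rels)
  rintro _ ⟨i, rfl⟩
  fin_cases i <;> simp

theorem of_pow_rels : (PresentedGroup.of 0 : PresentedGroup rels) ^ 5 = 1 ∧
    (PresentedGroup.of 1 : PresentedGroup rels) ^ 3 = 1 ∧
    (PresentedGroup.of 0 * PresentedGroup.of 1 : PresentedGroup rels) ^ 2 = 1 := by
  refine ⟨?_, ?_, ?_⟩ <;>
  · simp only [PresentedGroup.of, ← map_pow, ← map_mul]
    exact PresentedGroup.one_of_mem (by simp [rels])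

/-- The group presented by `⟨x, y ∣ x⁵ = y³ = (xy)² = 1⟩` is isomorphic to the
alternating group `A₅` on 5 letters. -/
theorem presented_group_iso_A5 :
    Nonempty (PresentedGroup rels ≃* alternatingGroup (Fin 5)) := by
  obtain ⟨hx, hy, hxy⟩ := of_pow_rels
  obtain ⟨_, hcard⟩ := finite_and_card_le_sixty closure_of_zero_of_one hx hy hxy
  let φ := PresentedGroup.toGroup a5Gen_rels
  have hφ : Function.Surjective φ := by
    rw [← MonoidHom.range_eq_top, eq_top_iff, ← closure_range_a5Gen, closure_le]
    rintro _ ⟨i, rfl⟩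
    exact ⟨PresentedGroup.of i, PresentedGroup.toGroup.of _⟩
  exact ⟨.ofBijective φ
    (hφ.bijective_of_nat_card_le (nat_card_alternatingGroup_fin_five ▸ hcard))⟩
end
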